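/- arXiv:1611.04539 — 2 statements merged into one kernel-verified Lean document; each statement's English description precedes it below -/
import Mathlib

section
/- Let a and b be coprime nonzero integers and let d > 1 be an odd integer. Then the following statements are equivalent: (1) d ∈ OG_{(a,b)}; (2) every positive divisor j of d satisfies j ∈ OG_{(a,b)}; (3) every prime divisor p of d satisfies p ∈ OG_{(a,b)}. -/
/-!
Two observations suffice. If `m ∣ a^k + b^k` and `n ∣ a^l + b^l` with `k, l` odd, then both divide
`a^(kl) + b^(kl)`, because `x + y ∣ x^j + y^j` for odd `j`; so the property passes to products of
coprime numbers. And if `n ∣ a^k + b^k` with `n` odd, then `a^k ≡ -b^k (mod n)` lifts to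
`a^(k n^e) ≡ (-b^k)^(n^e) = -b^(k n^e) (mod n^(e+1))`; so the property passes from an odd number
to all of its powers.
-/

/-- `d ∈ OG_{(a,b)}`: `d` divides `a^k + b^k` for some odd integer `k ≥ 1`. -/
def OddlyGood (a b : ℤ) (d : ℕ) : Prop :=
  ∃ k : ℕ, Odd k ∧ 1 ≤ k ∧ (d : ℤ) ∣ a ^ k + b ^ k

namespace OddlyGood

variable {a b : ℤ}

theorem of_dvd {d j : ℕ} (h : OddlyGood a b d) (hj : j ∣ d) : OddlyGood a b j := by
  obtain ⟨k, hk, hk1, hkd⟩ := h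
  exact ⟨k, hk, hk1, (Int.natCast_dvd_natCast.mpr hj).trans hkd⟩

theorem mul_of_coprime {m n : ℕ} (hm : OddlyGood a b m) (hn : OddlyGood a b n)
    (hmn : Nat.Coprime m n) : OddlyGood a b (m * n) := by
  obtain ⟨k, hk, -, hkm⟩ := hm
  obtain ⟨l, hl, -, hln⟩ := hn
  refine ⟨k * l, hk.mul hl, (hk.mul hl).pos, ?_⟩
  have hm' : (m : ℤ) ∣ a ^ (k * l) + b ^ (k * l) := by
    rw [pow_mul, pow_mul]
    exact hkm.trans (Odd.add_dvd_pow_add_pow _ _ hl)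
  have hn' : (n : ℤ) ∣ a ^ (k * l) + b ^ (k * l) := by
    rw [mul_comm k, pow_mul, pow_mul]
    exact hln.trans (Odd.add_dvd_pow_add_pow _ _ hk)
  exact_mod_cast (Nat.isCoprime_iff_coprime.mpr hmn).mul_dvd hm' hn'

theorem pow_succ {n : ℕ} (h : OddlyGood a b n) (hn : Odd n) (e : ℕ) :
    OddlyGood a b (n ^ (e + 1)) := by
  obtain ⟨k, hk, -, hkn⟩ := h
  have hodd : Odd (k * n ^ e) := hk.mul hn.pow
  refine ⟨k * n ^ e, hodd, hodd.pos, ?_⟩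
  have hsub : (n : ℤ) ∣ a ^ k - -b ^ k := by rwa [sub_neg_eq_add]
  have hlift := dvd_sub_pow_of_dvd_sub hsub e
  rw [Odd.neg_pow hn.pow, sub_neg_eq_add, ← pow_mul, ← pow_mul] at hlift
  exact_mod_cast hlift

end OddlyGood

theorem oddlyGood_of_forall_prime_dvd {a b : ℤ} {d : ℕ} (hd : Odd d)
    (h : ∀ p : ℕ, p.Prime → p ∣ d → OddlyGood a b p) : OddlyGood a b d := by
  induction d using Nat.recOnPosPrimePosCoprime with
  | zero => simp at hd
  | one => exact ⟨1, odd_one, le_rfl, by simp⟩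
  | prime_pow p e hp he =>
    have hpd : p ∣ p ^ e := dvd_pow_self p he.ne'
    obtain ⟨e, rfl⟩ := Nat.exists_eq_add_of_lt he
    simpa using (h p hp hpd).pow_succ (hd.of_dvd_nat hpd) e
  | coprime m n _ _ hmn ihm ihn =>
    obtain ⟨hm, hn⟩ := Nat.odd_mul.mp hd
    exact (ihm hm fun p hp hpm => h p hp (hpm.mul_right n)).mul_of_coprime
      (ihn hn fun p hp hpn => h p hp (hpn.mul_left m)) hmn

theorem oddlyGood_tfae_general (a b : ℤ) (d : ℕ) (hdodd : Odd d) :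
    (OddlyGood a b d ↔ ∀ j : ℕ, 0 < j → j ∣ d → OddlyGood a b j) ∧
      (OddlyGood a b d ↔ ∀ p : ℕ, p.Prime → p ∣ d → OddlyGood a b p) :=
  ⟨⟨fun h _ _ hj => h.of_dvd hj, fun h => h d hdodd.pos dvd_rfl⟩,
    ⟨fun h _ _ hp => h.of_dvd hp, oddlyGood_of_forall_prime_dvd hdodd⟩⟩

theorem oddlyGood_tfae (a b : ℤ) (ha : a ≠ 0) (hb : b ≠ 0) (hab : IsCoprime a b)
    (d : ℕ) (hd : 1 < d) (hdodd : Odd d) :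
    (OddlyGood a b d ↔ ∀ j : ℕ, 0 < j → j ∣ d → OddlyGood a b j) ∧
      (OddlyGood a b d ↔ ∀ p : ℕ, p.Prime → p ∣ d → OddlyGood a b p) :=
  oddlyGood_tfae_general a b d hdodd
end

section
/- Let a and b be coprime nonzero integers and let d > 1 be an odd integer with gcd(d, ab) = 1. Then d ∈ EG_{(a,b)} if and only if there exists an integer s ≥ 2 such that 2^s || ord_p(a/b) for every prime p dividing d. -/
/-! For an odd prime `p ∤ ab`, `p ∣ a^k + b^k` exactly when `ord_p(a/b)` divides `2k` but not
`k`, i.e. when `v₂(ord_p(a/b)) = v₂(k) + 1`; this gives `s = v₂(k) + 1` for every prime of `d`.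

Conversely, if `v₂(ord_p(a/b)) = s + 1` for all `p ∣ d`, let `c` be the odd part of `ord_d(a/b)`
and `k = 2^s c d`. Each `p ∣ d` divides `a^(2^(s+1) c) - b^(2^(s+1) c)`, so lifting the exponent
along the primes of `d` gives `d ∣ a^(2k) - b^(2k) = (a^k + b^k)(a^k - b^k)`, while no `p ∣ d`
divides `a^k - b^k` because `v₂(k) = s`. -/

/-- `d ∈ EG_{(a,b)}`: `d` divides `a^k + b^k` for some even integer `k ≥ 2`. -/
def EvenlyGood (a b : ℤ) (d : ℕ) : Prop :=
  ∃ k : ℕ, Even k ∧ 2 ≤ k ∧ (d : ℤ) ∣ a ^ k + b ^ k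

/-- `ord_n(a/b)`: the multiplicative order of `a·b⁻¹` modulo `n`. -/
noncomputable def ordAB (a b : ℤ) (n : ℕ) : ℕ :=
  orderOf ((a : ZMod n) * (b : ZMod n)⁻¹)

namespace Nat

theorem pow_dvd_and_not_pow_succ_dvd_iff {p n s : ℕ} (hp : p.Prime) (hn : n ≠ 0) :
    p ^ s ∣ n ∧ ¬ p ^ (s + 1) ∣ n ↔ n.factorization p = s := by
  rw [hp.pow_dvd_iff_le_factorization hn, hp.pow_dvd_iff_le_factorization hn]
  omega

theorem factorization_eq_succ_of_dvd_mul_of_not_dvd {p t k : ℕ} (hp : p.Prime) (hk : k ≠ 0)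
    (h : t ∣ p * k) (hnot : ¬ t ∣ k) : t.factorization p = k.factorization p + 1 := by
  have ht : t ≠ 0 := by rintro rfl; exact mul_ne_zero hp.ne_zero hk (zero_dvd_iff.1 h)
  have hle := (factorization_le_iff_dvd ht (mul_ne_zero hp.ne_zero hk)).2 h
  rw [factorization_mul hp.ne_zero hk, hp.factorization] at hle
  refine le_antisymm (by simpa [add_comm] using hle p)
    (Nat.succ_le_of_lt (not_le.1 fun hlt => hnot ?_))
  refine (factorization_le_iff_dvd ht hk).1 fun q => ?_
  rcases eq_or_ne q p with rfl | hq
  · exact hlt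
  · simpa [Finsupp.single_apply, hq.symm] using hle q

theorem dvd_pow_factorization_mul_ordCompl {p t T : ℕ} (h : t ∣ T) :
    t ∣ p ^ t.factorization p * ordCompl[p] T := by
  conv_lhs => rw [← ordProj_mul_ordCompl_eq_self t p]
  exact Nat.mul_dvd_mul_left _ (ordCompl_dvd_ordCompl_of_dvd h p)

theorem not_dvd_pow_mul_of_factorization_eq_succ {p t s m : ℕ} (hp : p.Prime) (hm : ¬ p ∣ m)
    (ht : t.factorization p = s + 1) : ¬ t ∣ p ^ s * m := fun h => hm <| by
  have := (ht ▸ ordProj_dvd t p).trans h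
  rwa [pow_succ, Nat.mul_dvd_mul_iff_left (pow_pos hp.pos s)] at this

end Nat

theorem Int.natCast_dvd_pow_sub_pow_of_prime_dvd_sub {X Y : ℤ} {d : ℕ}
    (h : ∀ p : ℕ, p.Prime → p ∣ d → (p : ℤ) ∣ X - Y) : (d : ℤ) ∣ X ^ d - Y ^ d := by
  rw [Int.natCast_dvd, Nat.dvd_iff_prime_pow_dvd_dvd]
  rintro p (_ | e) hp hpe
  · simp
  obtain ⟨q, hq⟩ := (pow_dvd_pow p e.le_succ).trans hpe
  have hlift := dvd_sub_pow_of_dvd_sub (h p hp ((dvd_pow_self p e.succ_ne_zero).trans hpe)) e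
  rw [← Int.natCast_dvd, hq, pow_mul, pow_mul]
  exact_mod_cast hlift.trans (sub_dvd_pow_sub_pow _ _ q)

theorem Int.isCoprime_natCast_of_forall_prime {d : ℕ} {z : ℤ}
    (h : ∀ p : ℕ, p.Prime → p ∣ d → ¬ (p : ℤ) ∣ z) : IsCoprime (d : ℤ) z := by
  rw [Int.isCoprime_iff_gcd_eq_one]
  exact Nat.coprime_of_dvd fun p hp hpd hpz => h p hp hpd (Int.natCast_dvd.2 hpz)

theorem pow_two_mul_sub_pow_two_mul {R : Type*} [CommRing R] (x y : R) (k : ℕ) :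
    x ^ (2 * k) - y ^ (2 * k) = (x ^ k + y ^ k) * (x ^ k - y ^ k) := by
  rw [pow_mul', pow_mul', sq_sub_sq]

theorem ZMod.isUnit_intCast_of_isCoprime {n : ℕ} {b : ℤ} (h : IsCoprime (n : ℤ) b) :
    IsUnit (b : ZMod n) := by
  obtain ⟨u, v, huv⟩ := h
  refine .of_mul_eq_one_right (v : ZMod n) ?_
  simpa using congrArg (Int.cast : ℤ → ZMod n) huv

section ordAB

variable {a b : ℤ}

theorem ordAB_dvd_iff {n : ℕ} (hb : IsCoprime (n : ℤ) b) (m : ℕ) :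
    ordAB a b n ∣ m ↔ (n : ℤ) ∣ a ^ m - b ^ m := by
  obtain ⟨u, hu⟩ := ZMod.isUnit_intCast_of_isCoprime hb
  rw [ordAB, orderOf_dvd_iff_pow_eq_one, ← ZMod.intCast_eq_intCast_iff_dvd_sub, ← hu,
    ZMod.inv_coe_unit, mul_pow, ← Units.val_pow_eq_pow_val, inv_pow, Units.mul_inv_eq_one,
    Units.val_pow_eq_pow_val, hu, eq_comm, Int.cast_pow, Int.cast_pow]

theorem ordAB_dvd_ordAB {m n : ℕ} (hmn : m ∣ n) (hb : IsCoprime (n : ℤ) b) :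
    ordAB a b m ∣ ordAB a b n := by
  have hmn' : (m : ℤ) ∣ n := Int.natCast_dvd_natCast.2 hmn
  rw [ordAB_dvd_iff (hb.of_isCoprime_of_dvd_left hmn')]
  exact hmn'.trans ((ordAB_dvd_iff hb _).1 dvd_rfl)

theorem ordAB_ne_zero {n : ℕ} [NeZero n] (ha : IsCoprime (n : ℤ) a)
    (hb : IsCoprime (n : ℤ) b) : ordAB a b n ≠ 0 := by
  obtain ⟨u, hu⟩ := (ZMod.isUnit_intCast_of_isCoprime ha).mul
    (ZMod.isUnit_inv (ZMod.isUnit_intCast_of_isCoprime hb))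
  rw [ordAB, ← hu, orderOf_units]
  exact (orderOf_pos u).ne'

theorem factorization_two_ordAB_of_dvd_pow_add_pow {n k : ℕ} (hn : n ≠ 1) (hodd : Odd n)
    (ha : IsCoprime (n : ℤ) a) (hb : IsCoprime (n : ℤ) b) (hk : k ≠ 0)
    (h : (n : ℤ) ∣ a ^ k + b ^ k) : (ordAB a b n).factorization 2 = k.factorization 2 + 1 := by
  refine Nat.factorization_eq_succ_of_dvd_mul_of_not_dvd Nat.prime_two hk ?_ ?_
  · rw [ordAB_dvd_iff hb, pow_two_mul_sub_pow_two_mul]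
    exact h.mul_right _
  · rw [ordAB_dvd_iff hb]
    intro hsub
    have h2 : IsCoprime (n : ℤ) 2 := by
      exact_mod_cast Nat.isCoprime_iff_coprime.2 (Nat.coprime_two_right.2 hodd)
    have hunit := (h2.mul_right ha.pow_right).isUnit_of_dvd' dvd_rfl
      (by simpa [two_mul] using dvd_add h hsub)
    exact hn (Nat.isUnit_iff.1 (Int.ofNat_isUnit.1 hunit))

theorem exists_odd_dvd_pow_add_pow {d s : ℕ} (hodd : Odd d) (ha : IsCoprime (d : ℤ) a)
    (hb : IsCoprime (d : ℤ) b)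
    (h : ∀ p : ℕ, p.Prime → p ∣ d → (ordAB a b p).factorization 2 = s + 1) :
    ∃ m, Odd m ∧ (d : ℤ) ∣ a ^ (2 ^ s * m) + b ^ (2 ^ s * m) := by
  have : NeZero d := ⟨hodd.pos.ne'⟩
  set c := ordCompl[2] (ordAB a b d)
  have hc : Odd c := Nat.odd_iff.2 <| Nat.two_dvd_ne_zero.1 <|
    Nat.not_dvd_ordCompl Nat.prime_two (ordAB_ne_zero ha hb)
  refine ⟨c * d, hc.mul hodd, ?_⟩
  have hbp {p : ℕ} (hpd : p ∣ d) : IsCoprime (p : ℤ) b :=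
    hb.of_isCoprime_of_dvd_left (Int.natCast_dvd_natCast.2 hpd)
  have hsub : ∀ p : ℕ, p.Prime → p ∣ d →
      (p : ℤ) ∣ a ^ (2 ^ (s + 1) * c) - b ^ (2 ^ (s + 1) * c) := by
    intro p hp hpd
    rw [← ordAB_dvd_iff (hbp hpd), ← h p hp hpd]
    exact Nat.dvd_pow_factorization_mul_ordCompl (ordAB_dvd_ordAB hpd hb)
  have hprod := Int.natCast_dvd_pow_sub_pow_of_prime_dvd_sub hsub
  rw [← pow_mul, ← pow_mul, show 2 ^ (s + 1) * c * d = 2 * (2 ^ s * (c * d)) by ring,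
    pow_two_mul_sub_pow_two_mul] at hprod
  refine (Int.isCoprime_natCast_of_forall_prime fun p hp hpd => ?_).dvd_of_dvd_mul_right hprod
  rw [← ordAB_dvd_iff (hbp hpd)]
  exact Nat.not_dvd_pow_mul_of_factorization_eq_succ Nat.prime_two
    (Nat.two_dvd_ne_zero.2 (Nat.odd_iff.1 (hc.mul hodd))) (h p hp hpd)

end ordAB

theorem evenlyGood_iff_general (a b : ℤ) (d : ℕ) (hdodd : Odd d) (hdab : IsCoprime (d : ℤ) (a * b)) :
    EvenlyGood a b d ↔ ∃ s : ℕ, 2 ≤ s ∧ ∀ p : ℕ, p.Prime → p ∣ d →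
      2 ^ s ∣ ordAB a b p ∧ ¬ 2 ^ (s + 1) ∣ ordAB a b p := by
  have hda := hdab.of_mul_right_left
  have hdb := hdab.of_mul_right_right
  have hcop : ∀ p : ℕ, p ∣ d → IsCoprime (p : ℤ) a ∧ IsCoprime (p : ℤ) b := fun p hpd =>
    have hpd' : (p : ℤ) ∣ d := Int.natCast_dvd_natCast.2 hpd
    ⟨hda.of_isCoprime_of_dvd_left hpd', hdb.of_isCoprime_of_dvd_left hpd'⟩
  have hval (s : ℕ) :
      (∀ p : ℕ, p.Prime → p ∣ d → 2 ^ s ∣ ordAB a b p ∧ ¬ 2 ^ (s + 1) ∣ ordAB a b p) ↔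
        ∀ p : ℕ, p.Prime → p ∣ d → (ordAB a b p).factorization 2 = s :=
    forall₃_congr fun p hp hpd =>
      have : NeZero p := ⟨hp.ne_zero⟩
      Nat.pow_dvd_and_not_pow_succ_dvd_iff Nat.prime_two
        (ordAB_ne_zero (hcop p hpd).1 (hcop p hpd).2)
  simp only [hval]
  constructor
  · rintro ⟨k, hk, hk2, hdk⟩
    have hk0 : k ≠ 0 := by omega
    have hk1 : 1 ≤ k.factorization 2 :=
      (Nat.prime_two.pow_dvd_iff_le_factorization hk0).1 (by simpa using hk.two_dvd)
    refine ⟨k.factorization 2 + 1, by omega, fun p hp hpd => ?_⟩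
    exact factorization_two_ordAB_of_dvd_pow_add_pow hp.ne_one (hdodd.of_dvd_nat hpd)
      (hcop p hpd).1 (hcop p hpd).2 hk0 ((Int.natCast_dvd_natCast.2 hpd).trans hdk)
  · rintro ⟨_ | s, hs, h⟩
    · omega
    obtain ⟨m, hm, hdm⟩ := exists_odd_dvd_pow_add_pow hdodd hda hdb h
    refine ⟨2 ^ s * m, (Nat.even_pow.2 ⟨even_two, by omega⟩).mul_right m, ?_, hdm⟩
    calc 2 = 2 ^ 1 * 1 := rfl
      _ ≤ 2 ^ s * m := Nat.mul_le_mul (Nat.pow_le_pow_right two_pos (by omega)) hm.pos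

theorem evenlyGood_iff (a b : ℤ) (ha : a ≠ 0) (hb : b ≠ 0) (hab : IsCoprime a b)
    (d : ℕ) (hd : 1 < d) (hdodd : Odd d) (hdab : IsCoprime (d : ℤ) (a * b)) :
    EvenlyGood a b d ↔ ∃ s : ℕ, 2 ≤ s ∧ ∀ p : ℕ, p.Prime → p ∣ d →
      2 ^ s ∣ ordAB a b p ∧ ¬ 2 ^ (s + 1) ∣ ordAB a b p :=
  evenlyGood_iff_general a b d hdodd hdab
end
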